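/- For every α ∈ (0,1], every 1-Hölder-α function f on the Sierpiński triangle Δ, and Lebesgue-almost every r ∈ ℝ, the upper box dimension of f⁻¹(r) is at most log 3/log 2 − α. -/
import Mathlib


open MeasureTheory Set Filter
open scoped ENNReal Topology

/-- Minimal number of sets of diameter at most `δ` needed to cover `s`. -/
noncomputable def coverNum {X : Type*} [MetricSpace X] (s : Set X) (δ : ℝ) : ℕ :=
  sInf {m : ℕ | ∃ C : Finset (Set X), C.card = m ∧ (∀ c ∈ C, Metric.diam c ≤ δ) ∧
    s ⊆ ⋃ c ∈ C, c}

/-- Upper box-counting dimension of a set. -/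
noncomputable def upperBoxDim {X : Type*} [MetricSpace X] (s : Set X) : ℝ :=
  limsup (fun δ : ℝ => Real.log (coverNum s δ) / (-Real.log δ))
    (nhdsWithin 0 (Set.Ioi 0))

/-- The three similarities of ratio `1/2` generating the Sierpiński triangle. -/
noncomputable def T1 (x : ℝ × ℝ) : ℝ × ℝ := (x.1 / 2, x.2 / 2)
noncomputable def T2 (x : ℝ × ℝ) : ℝ × ℝ := (x.1 / 2 + 1 / 2, x.2 / 2)
noncomputable def T3 (x : ℝ × ℝ) : ℝ × ℝ := (x.1 / 2 + 1 / 4, x.2 / 2 + Real.sqrt 3 / 4)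

lemma dist_T1 (x y : ℝ × ℝ) : dist (T1 x) (T1 y) = dist x y / 2 := by
  simp only [T1, Prod.dist_eq, Real.dist_eq, div_sub_div_same, abs_div,
    (by norm_num : |(2:ℝ)| = 2), max_div_div_right (by norm_num : (0:ℝ) ≤ 2)]

lemma dist_T2 (x y : ℝ × ℝ) : dist (T2 x) (T2 y) = dist x y / 2 := by
  have h : ∀ a b : ℝ, a / 2 + 1/2 - (b / 2 + 1/2) = (a - b)/2 := by intro a b; ring
  simp only [T2, Prod.dist_eq, Real.dist_eq, h, div_sub_div_same, abs_div,
    (by norm_num : |(2:ℝ)| = 2), max_div_div_right (by norm_num : (0:ℝ) ≤ 2)]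

lemma dist_T3 (x y : ℝ × ℝ) : dist (T3 x) (T3 y) = dist x y / 2 := by
  have h : ∀ a c b : ℝ, a / 2 + c - (b / 2 + c) = (a - b)/2 := by intro a b c; ring
  simp only [T3, Prod.dist_eq, Real.dist_eq, h, div_sub_div_same, abs_div,
    (by norm_num : |(2:ℝ)| = 2), max_div_div_right (by norm_num : (0:ℝ) ≤ 2)]

open Classical in
noncomputable def pieces (Δ : Set (ℝ × ℝ)) : ℕ → Finset (Set (ℝ × ℝ))
  | 0 => {Δ}
  | n+1 => ((pieces Δ n).image (fun P => T1 '' P)) ∪ ((pieces Δ n).image (fun P => T2 '' P))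
      ∪ ((pieces Δ n).image (fun P => T3 '' P))

lemma card_pieces (Δ : Set (ℝ × ℝ)) (n : ℕ) : (pieces Δ n).card ≤ 3 ^ n := by
  induction n with
  | zero => simp [pieces]
  | succ n ih =>
    classical
    calc (pieces Δ (n+1)).card
        ≤ ((pieces Δ n).image (fun P => T1 '' P)).card +
          ((pieces Δ n).image (fun P => T2 '' P)).card +
          ((pieces Δ n).image (fun P => T3 '' P)).card := by
          simp only [pieces]
          exact le_trans (Finset.card_union_le _ _)
            (by gcongr ?_ + _; exact Finset.card_union_le _ _)
      _ ≤ 3^n + 3^n + 3^n := by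
          gcongr <;> exact le_trans (Finset.card_image_le) ih
      _ = 3^(n+1) := by ring

lemma mem_pieces_succ {Δ : Set (ℝ × ℝ)} {n : ℕ} {P : Set (ℝ × ℝ)} :
    P ∈ pieces Δ (n+1) ↔ ∃ Q ∈ pieces Δ n, P = T1 '' Q ∨ P = T2 '' Q ∨ P = T3 '' Q := by
  classical
  simp only [pieces, Finset.mem_union, Finset.mem_image]
  constructor
  · rintro ((⟨Q, hQ, rfl⟩ | ⟨Q, hQ, rfl⟩) | ⟨Q, hQ, rfl⟩) <;> exact ⟨Q, hQ, by tauto⟩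
  · rintro ⟨Q, hQ, (rfl | rfl | rfl)⟩ <;> [left;left;right] <;> [left;right;skip] <;>
      exact ⟨Q, hQ, rfl⟩

section Pieces
variable {Δ : Set (ℝ × ℝ)} (hself : Δ = T1 '' Δ ∪ T2 '' Δ ∪ T3 '' Δ)
include hself

lemma piece_subset {n : ℕ} {P : Set (ℝ × ℝ)} (hP : P ∈ pieces Δ n) : P ⊆ Δ := by
  induction n generalizing P with
  | zero => simp only [pieces, Finset.mem_singleton] at hP; subst hP; rfl
  | succ n ih =>
    have hsub : ∀ g : (ℝ×ℝ) → (ℝ×ℝ), (g = T1 ∨ g = T2 ∨ g = T3) → g '' Δ ⊆ Δ := by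
      intro g hg x hx
      rw [hself]
      rcases hg with rfl | rfl | rfl <;> simp only [Set.mem_union] <;> tauto
    rcases mem_pieces_succ.1 hP with ⟨Q, hQ, (rfl | rfl | rfl)⟩ <;>
      exact subset_trans (Set.image_mono (ih hQ)) (hsub _ (by tauto))

omit hself in
lemma piece_nonempty (hne : Δ.Nonempty) {n : ℕ} {P : Set (ℝ × ℝ)} (hP : P ∈ pieces Δ n) :
    P.Nonempty := by
  induction n generalizing P with
  | zero => simp only [pieces, Finset.mem_singleton] at hP; subst hP; exact hne
  | succ n ih =>
    rcases mem_pieces_succ.1 hP with ⟨Q, hQ, (rfl | rfl | rfl)⟩ <;> exact (ih hQ).image _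

lemma piece_cover {n : ℕ} : Δ ⊆ ⋃ P ∈ pieces Δ n, P := by
  induction n with
  | zero => simp [pieces]
  | succ n ih =>
    intro x hx
    have hx' : x ∈ T1 '' Δ ∪ T2 '' Δ ∪ T3 '' Δ := hself ▸ hx
    simp only [Set.mem_iUnion, exists_prop]
    rcases hx' with ((⟨y, hy, rfl⟩ | ⟨y, hy, rfl⟩) | ⟨y, hy, rfl⟩) <;>
    · obtain ⟨Q, hQ, hyQ⟩ := by simpa only [Set.mem_iUnion, exists_prop] using ih hy
      exact ⟨_, mem_pieces_succ.2 ⟨Q, hQ, by tauto⟩, Set.mem_image_of_mem _ hyQ⟩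

lemma piece_diam (hbd : Bornology.IsBounded Δ) {n : ℕ} {P : Set (ℝ × ℝ)}
    (hP : P ∈ pieces Δ n) : Metric.diam P ≤ Metric.diam Δ / 2 ^ n := by
  induction n generalizing P with
  | zero => simp only [pieces, Finset.mem_singleton] at hP; subst hP; simp
  | succ n ih =>
    have hD : 0 ≤ Metric.diam Δ / 2 ^ n := by positivity
    rcases mem_pieces_succ.1 hP with ⟨Q, hQ, (rfl | rfl | rfl)⟩ <;>
    · refine Metric.diam_le_of_forall_dist_le (by positivity) ?_
      rintro _ ⟨x, hx, rfl⟩ _ ⟨y, hy, rfl⟩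
      rw [pow_succ, ← div_div]
      first
        | rw [dist_T1 x y]
        | rw [dist_T2 x y]
        | rw [dist_T3 x y]
      have hxy : dist x y ≤ Metric.diam Q :=
        Metric.dist_le_diam_of_mem (hbd.subset (piece_subset hself hQ)) hx hy
      have := ih hQ
      linarith

end Pieces

open Classical in
noncomputable def pt (P : Set (ℝ × ℝ)) : ℝ × ℝ := if h : P.Nonempty then h.some else 0

lemma pt_mem {P : Set (ℝ × ℝ)} (h : P.Nonempty) : pt P ∈ P := by
  classical
  rw [pt]
  split
  · exact Set.Nonempty.some_mem _
  · exact absurd h ‹¬P.Nonempty›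

section Main
variable {Δ : Set (ℝ × ℝ)} (hne : Δ.Nonempty) (hcpt : IsCompact Δ)
    (hself : Δ = T1 '' Δ ∪ T2 '' Δ ∪ T3 '' Δ)
    {α : ℝ} (hα0 : 0 < α) (hα1 : α ≤ 1)
    {f : ℝ × ℝ → ℝ}
    (hf : ∀ a ∈ Δ, ∀ b ∈ Δ, |f a - f b| ≤ dist a b ^ α)

include hne hcpt hself in
lemma diam_half : (1:ℝ)/2 ≤ Metric.diam Δ := by
  obtain ⟨p, hp⟩ := hne
  have h1 : T1 p ∈ Δ := by rw [hself]; exact Or.inl (Or.inl ⟨p, hp, rfl⟩)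
  have h2 : T2 p ∈ Δ := by rw [hself]; exact Or.inl (Or.inr ⟨p, hp, rfl⟩)
  have hd : dist (T1 p) (T2 p) = 1/2 := by
    simp [T1, T2, Prod.dist_eq, Real.dist_eq]
  calc (1:ℝ)/2 = dist (T1 p) (T2 p) := hd.symm
    _ ≤ Metric.diam Δ := Metric.dist_le_diam_of_mem hcpt.isBounded h1 h2

include hcpt hself hα0 hf in
lemma coverNum_le_filter_card (n : ℕ) (r δ : ℝ) (hδ : Metric.diam Δ / 2 ^ n ≤ δ) :
    coverNum (Δ ∩ f ⁻¹' {r}) δ ≤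
      ((pieces Δ n).filter
        (fun P => |r - f (pt P)| ≤ (Metric.diam Δ / 2 ^ n) ^ α)).card := by
  classical
  set C := (pieces Δ n).filter
      (fun P => |r - f (pt P)| ≤ (Metric.diam Δ / 2 ^ n) ^ α) with hC
  refine Nat.sInf_le ⟨C, rfl, ?_, ?_⟩
  · intro c hc
    exact le_trans (piece_diam hself hcpt.isBounded (Finset.mem_filter.1 hc).1) hδ
  · rintro a ⟨haΔ, har⟩
    have har : f a = r := har
    obtain ⟨P, hP, haP⟩ := by
      simpa only [Set.mem_iUnion, exists_prop] using piece_cover hself (n := n) haΔ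
    have hPne : P.Nonempty := ⟨a, haP⟩
    have hptP : pt P ∈ P := pt_mem hPne
    have hPsub : P ⊆ Δ := piece_subset hself hP
    have hdist : dist a (pt P) ≤ Metric.diam Δ / 2 ^ n :=
      le_trans (Metric.dist_le_diam_of_mem (hcpt.isBounded.subset hPsub) haP hptP)
        (piece_diam hself hcpt.isBounded hP)
    have hfP : |r - f (pt P)| ≤ (Metric.diam Δ / 2 ^ n) ^ α := by
      rw [← har]
      exact le_trans (hf a haΔ (pt P) (hPsub hptP))
        (Real.rpow_le_rpow dist_nonneg hdist hα0.le)
    simp only [Set.mem_iUnion, exists_prop]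
    exact ⟨P, Finset.mem_filter.2 ⟨hP, hfP⟩, haP⟩

end Main

section AE
variable {Δ : Set (ℝ × ℝ)} (hne : Δ.Nonempty) (hcpt : IsCompact Δ)
    (hself : Δ = T1 '' Δ ∪ T2 '' Δ ∪ T3 '' Δ)
    {α : ℝ} (hα0 : 0 < α) (hα1 : α ≤ 1)
    {f : ℝ × ℝ → ℝ}

include hne hcpt hself hα0 in
lemma ae_card_bound : ∀ᵐ r : ℝ, ∀ᶠ n : ℕ in atTop,
    (((pieces Δ n).filter
      (fun P => |r - f (pt P)| ≤ (Metric.diam Δ / 2 ^ n) ^ α)).card : ℝ)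
      ≤ ((n:ℝ)+1)^2 * 3^n * (2 * (Metric.diam Δ / 2 ^ n) ^ α) := by
  classical
  set D := Metric.diam Δ with hDdef
  have hD : 0 < D := lt_of_lt_of_le (by norm_num) (diam_half hne hcpt hself)
  set L : ℕ → ℝ := fun n => (D / 2 ^ n) ^ α with hLdef
  have hL : ∀ n, 0 < L n := fun n => Real.rpow_pos_of_pos (by positivity) _
  set F : ℕ → ℝ → ℝ≥0∞ := fun n r =>
    ∑ P ∈ pieces Δ n, (Metric.closedBall (f (pt P)) (L n)).indicator 1 r with hFdef
  set t : ℕ → ℝ≥0∞ := fun n => ENNReal.ofReal (((n:ℝ)+1)^2 * (3^n * (2 * L n))) with htdef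
  set s : ℕ → Set ℝ := fun n => {r | t n ≤ F n r} with hsdef
  have hFmeas : ∀ n, Measurable (F n) := fun n =>
    Finset.measurable_sum _ fun P _ =>
      measurable_one.indicator measurableSet_closedBall
  have hInt : ∀ n, (∫⁻ r, F n r) ≤ ENNReal.ofReal ((3:ℝ)^n * (2 * L n)) := by
    intro n
    rw [hFdef]
    simp only
    rw [lintegral_finset_sum _ fun P _ =>
      measurable_one.indicator measurableSet_closedBall]
    have : ∀ P ∈ pieces Δ n,
        (∫⁻ r, (Metric.closedBall (f (pt P)) (L n)).indicator 1 r)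
          = ENNReal.ofReal (2 * L n) := by
      intro P _
      rw [lintegral_indicator_one measurableSet_closedBall,
        Real.volume_closedBall]
    rw [Finset.sum_congr rfl this, Finset.sum_const, nsmul_eq_mul]
    calc ((pieces Δ n).card : ℝ≥0∞) * ENNReal.ofReal (2 * L n)
        ≤ ((3:ℝ≥0∞)^n) * ENNReal.ofReal (2 * L n) := by
          gcongr
          exact_mod_cast card_pieces Δ n
      _ = ENNReal.ofReal ((3:ℝ)^n * (2 * L n)) := by
          rw [ENNReal.ofReal_mul (by positivity : (0:ℝ) ≤ 3^n)]
          congr 1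
          rw [ENNReal.ofReal_pow (by norm_num : (0:ℝ) ≤ 3)]
          norm_num
  have hμs : ∀ n, volume (s n) ≤ ENNReal.ofReal (1/((n:ℝ)+1)^2) := by
    intro n
    have hy : (0:ℝ) < ((n:ℝ)+1)^2 * (3^n * (2 * L n)) := by
      have := hL n; positivity
    have ht0 : t n ≠ 0 := by
      simp only [htdef, ne_eq, ENNReal.ofReal_eq_zero, not_le]
      exact hy
    have httop : t n ≠ ⊤ := ENNReal.ofReal_ne_top
    calc volume (s n) ≤ (∫⁻ r, F n r) / t n :=
          meas_ge_le_lintegral_div (hFmeas n).aemeasurable ht0 httop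
      _ ≤ ENNReal.ofReal ((3:ℝ)^n * (2 * L n)) / t n := by
          gcongr
          exact hInt n
      _ = ENNReal.ofReal (((3:ℝ)^n * (2 * L n)) / (((n:ℝ)+1)^2 * (3^n * (2 * L n)))) := by
          rw [ENNReal.ofReal_div_of_pos hy]
      _ = ENNReal.ofReal (1/((n:ℝ)+1)^2) := by
          congr 1
          have hx : (3:ℝ)^n * (2 * L n) ≠ 0 := by have := hL n; positivity
          rw [mul_comm (((n:ℝ)+1)^2) _, ← div_div, div_self hx]
  have hsummable : Summable (fun n : ℕ => 1/((n:ℝ)+1)^2) := by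
    have h := (summable_nat_add_iff (f := fun n : ℕ => 1/(n:ℝ)^2) 1).2
      ((Real.summable_one_div_nat_pow).2 one_lt_two)
    simpa using h
  have hsum : (∑' n, volume (s n)) ≠ ⊤ := by
    refine ne_top_of_le_ne_top (b := ENNReal.ofReal (∑' n : ℕ, 1/((n:ℝ)+1)^2)) ENNReal.ofReal_ne_top ?_
    rw [ENNReal.ofReal_tsum_of_nonneg (fun n => by positivity) hsummable]
    exact ENNReal.tsum_le_tsum hμs
  filter_upwards [ae_eventually_notMem hsum] with r hr
  filter_upwards [hr] with n hn
  have hFr : F n r = (((pieces Δ n).filter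
      (fun P => |r - f (pt P)| ≤ L n)).card : ℝ≥0∞) := by
    rw [Finset.card_filter, hFdef]
    push_cast
    refine Finset.sum_congr rfl fun P _ => ?_
    by_cases h : |r - f (pt P)| ≤ L n <;>
      simp [Set.indicator_apply, Metric.mem_closedBall, Real.dist_eq, h]
  have hlt : F n r < t n := lt_of_not_ge hn
  rw [hFr, htdef] at hlt
  have := (ENNReal.lt_ofReal_iff_toReal_lt (by simp)).1 hlt
  simpa [mul_assoc] using this.le
end AE

lemma logB_eq (D α : ℝ) (hD : 0 < D) (m : ℕ) :
    Real.log (((m:ℝ)+1)^2 * 3^m * (2 * (D / 2^m) ^ α))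
      = 2*Real.log ((m:ℝ)+1) + m*Real.log 3 + Real.log 2
        + α*(Real.log D - m*Real.log 2) := by
  have h1 : ((m:ℝ)+1)^2 ≠ 0 := by positivity
  have h2 : (3:ℝ)^m ≠ 0 := by positivity
  have h3 : (0:ℝ) < D / 2^m := by positivity
  have h4 : (2:ℝ) * (D / 2^m) ^ α ≠ 0 := by
    have := Real.rpow_pos_of_pos h3 α; positivity
  rw [Real.log_mul (mul_ne_zero h1 h2) h4, Real.log_mul h1 h2,
    Real.log_mul two_ne_zero (by have := Real.rpow_pos_of_pos h3 α; positivity),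
    Real.log_rpow h3, Real.log_div (ne_of_gt hD) (by positivity : (2:ℝ)^m ≠ 0),
    Real.log_pow, Real.log_pow, Real.log_pow]
  push_cast
  ring

lemma tendsto_logB (D α : ℝ) (hD : 0 < D) :
    Tendsto (fun n : ℕ =>
      Real.log ((((n+1:ℕ):ℝ)+1)^2 * 3^(n+1) * (2 * (D / 2^(n+1)) ^ α)) /
        ((n:ℝ) * Real.log 2 - Real.log D)) atTop
      (𝓝 (Real.log 3 / Real.log 2 - α)) := by
  have hL2 : (0:ℝ) < Real.log 2 := Real.log_pos one_lt_two
  set c : ℝ := Real.log 3 - α * Real.log 2 with hc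
  set K : ℝ := Real.log 2 + α * Real.log D with hK
  set num : ℕ → ℝ := fun n => 2*Real.log ((n:ℝ)+2) + ((n:ℝ)+1)*c + K with hnum
  set den : ℕ → ℝ := fun n => (n:ℝ) * Real.log 2 - Real.log D with hden
  have hrw : ∀ n : ℕ,
      Real.log ((((n+1:ℕ):ℝ)+1)^2 * 3^(n+1) * (2 * (D / 2^(n+1)) ^ α)) = num n := by
    intro n
    rw [logB_eq D α hD (n+1)]
    simp only [hnum, hc, hK]
    push_cast
    ring
  have hinv : Tendsto (fun n : ℕ => 1/(n:ℝ)) atTop (𝓝 0) :=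
    tendsto_one_div_atTop_nhds_zero_nat
  have hlogn : Tendsto (fun n : ℕ => Real.log ((n:ℝ)+2) * (1/(n:ℝ))) atTop (𝓝 0) := by
    have h0 := Real.tendsto_pow_log_div_mul_add_atTop 1 (-2) 1 one_ne_zero
    have h1 : Tendsto (fun n : ℕ => (n:ℝ)+2) atTop atTop :=
      tendsto_atTop_add_const_right _ 2 tendsto_natCast_atTop_atTop
    have h2 := h0.comp h1
    refine h2.congr fun n => ?_
    simp only [Function.comp]
    rw [pow_one]
    rw [div_eq_mul_inv, one_div]
    congr 1
    · congr 1
      ring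
  have hnn : Tendsto (fun n : ℕ => (n:ℝ) * (1/(n:ℝ))) atTop (𝓝 1) := by
    refine Tendsto.congr' ?_ tendsto_const_nhds
    filter_upwards [eventually_ge_atTop 1] with n hn
    have : (n:ℝ) ≠ 0 := Nat.cast_ne_zero.2 (by omega)
    field_simp
  have hnumlim : Tendsto (fun n => num n * (1/(n:ℝ))) atTop (𝓝 c) := by
    have expand : ∀ n : ℕ, num n * (1/(n:ℝ))
        = 2*(Real.log ((n:ℝ)+2) * (1/(n:ℝ))) + c*((n:ℝ)*(1/(n:ℝ))) + c*(1/(n:ℝ))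
          + K*(1/(n:ℝ)) := by
      intro n; simp only [hnum]; ring
    rw [show c = 2*0 + c*1 + c*0 + K*0 by ring]
    exact Tendsto.congr (fun n => (expand n).symm)
      ((((hlogn.const_mul 2).add (hnn.const_mul c)).add (hinv.const_mul c)).add
        (hinv.const_mul K))
  have hdenlim : Tendsto (fun n => den n * (1/(n:ℝ))) atTop (𝓝 (Real.log 2)) := by
    have expand : ∀ n : ℕ, den n * (1/(n:ℝ))
        = Real.log 2*((n:ℝ)*(1/(n:ℝ))) - Real.log D*(1/(n:ℝ)) := by
      intro n; simp only [hden]; ring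
    rw [show Real.log 2 = Real.log 2*1 - Real.log D*0 by ring]
    exact Tendsto.congr (fun n => (expand n).symm)
      ((hnn.const_mul (Real.log 2)).sub (hinv.const_mul (Real.log D)))
  have hdiv : Tendsto (fun n => (num n * (1/(n:ℝ))) / (den n * (1/(n:ℝ)))) atTop
      (𝓝 (c / Real.log 2)) := hnumlim.div hdenlim (ne_of_gt hL2)
  have hcL : c / Real.log 2 = Real.log 3 / Real.log 2 - α := by
    rw [hc]
    field_simp
  rw [← hcL]
  refine Tendsto.congr' ?_ hdiv
  filter_upwards [eventually_ge_atTop 1] with n hn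
  have hn0 : (1/(n:ℝ)) ≠ 0 := one_div_ne_zero (Nat.cast_ne_zero.2 (by omega))
  rw [mul_div_mul_right _ _ hn0, hrw n]

/-- For every `α ∈ (0,1]`, every `1`-Hölder-`α` function `f` on the Sierpiński
triangle `Δ` (the attractor of `T1, T2, T3`), and Lebesgue-almost every `r ∈ ℝ`,
the upper box dimension of `f⁻¹(r)` is at most `log 3/log 2 − α`. -/
theorem sierpinski_upper_box_level_sets (Δ : Set (ℝ × ℝ))
    (hne : Δ.Nonempty) (hcpt : IsCompact Δ)
    (hself : Δ = T1 '' Δ ∪ T2 '' Δ ∪ T3 '' Δ)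
    (α : ℝ) (hα : 0 < α ∧ α ≤ 1)
    (f : ℝ × ℝ → ℝ)
    (hf : ∀ a ∈ Δ, ∀ b ∈ Δ, |f a - f b| ≤ dist a b ^ α) :
    ∀ᵐ r : ℝ, upperBoxDim (Δ ∩ f ⁻¹' {r}) ≤ Real.log 3 / Real.log 2 - α := by
  obtain ⟨hα0, hα1⟩ := hα
  have hL2 : (0:ℝ) < Real.log 2 := Real.log_pos one_lt_two
  set D := Metric.diam Δ with hDdef
  have hD : 0 < D := lt_of_lt_of_le (by norm_num) (diam_half hne hcpt hself)
  have hβ : α < Real.log 3 / Real.log 2 := by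
    have h32 : (1:ℝ) < Real.log 3 / Real.log 2 :=
      (one_lt_div hL2).2 (Real.log_lt_log (by norm_num) (by norm_num))
    linarith
  filter_upwards [ae_card_bound hne hcpt hself hα0 (f := f)] with r hr
  set S := Δ ∩ f ⁻¹' {r} with hS
  refine le_of_forall_pos_le_add fun ε hε => ?_
  rw [upperBoxDim]
  have hIoo1 : Set.Ioo (0:ℝ) 1 ∈ nhdsWithin 0 (Set.Ioi (0:ℝ)) :=
    Ioo_mem_nhdsGT_of_mem ⟨le_refl 0, one_pos⟩
  have hge : ∀ᶠ δ in nhdsWithin 0 (Set.Ioi (0:ℝ)),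
      0 ≤ Real.log (coverNum S δ) / (-Real.log δ) := by
    filter_upwards [hIoo1] with δ hδ
    exact div_nonneg (Real.log_natCast_nonneg _)
      (neg_nonneg.2 (Real.log_nonpos hδ.1.le hδ.2.le))
  have hcb : IsCoboundedUnder (· ≤ ·) (nhdsWithin (0:ℝ) (Set.Ioi 0))
      (fun δ : ℝ => Real.log (coverNum S δ) / (-Real.log δ)) :=
    isCoboundedUnder_le_of_eventually_le _ hge
  -- gather eventual properties of n
  have hden_tendsto : Tendsto (fun n : ℕ => (n:ℝ) * Real.log 2 - Real.log D) atTop atTop :=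
    tendsto_atTop_add_const_right _ _ (tendsto_natCast_atTop_atTop.atTop_mul_const hL2)
  have htb := (tendsto_logB D α hD).eventually_lt_const
    (lt_add_of_pos_right _ hε)
  obtain ⟨N, hN⟩ := eventually_atTop.1
    (hr.and (htb.and (hden_tendsto.eventually_gt_atTop 0)))
  refine limsup_le_of_le hcb ?_
  have hm : (0:ℝ) < min (D / 2 ^ N) 1 := lt_min (by positivity) one_pos
  filter_upwards [Ioo_mem_nhdsGT_of_mem ⟨le_refl 0, hm⟩] with δ hδ
  obtain ⟨hδ0, hδm⟩ := hδ
  have hδ1 : δ < 1 := lt_of_lt_of_le hδm (min_le_right _ _)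
  have hδD : δ < D / 2 ^ N := lt_of_lt_of_le hδm (min_le_left _ _)
  have hDδ : 0 < D / δ := div_pos hD hδ0
  set n := ⌊Real.logb 2 (D / δ)⌋₊ with hn
  have hlogb_gt : (N:ℝ) < Real.logb 2 (D / δ) := by
    refine (Real.lt_logb_iff_rpow_lt one_lt_two hDδ).2 ?_
    rw [Real.rpow_natCast]
    rw [lt_div_iff₀ hδ0] at *
    calc (2:ℝ)^N * δ < 2^N * (D / 2^N) := by gcongr
      _ = D := by field_simp
  have hnN : N ≤ n := Nat.le_floor hlogb_gt.le
  obtain ⟨hr1, hr2, hr3⟩ := hN n hnN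
  obtain ⟨hs1, -, -⟩ := hN (n+1) (by omega)
  have h_up : δ ≤ D / 2 ^ n := by
    have h1 : (n:ℝ) ≤ Real.logb 2 (D / δ) := Nat.floor_le ((Nat.cast_nonneg N).trans hlogb_gt.le)
    have h2 : (2:ℝ) ^ n ≤ D / δ := by
      have := (Real.le_logb_iff_rpow_le one_lt_two hDδ).1 h1
      rwa [Real.rpow_natCast] at this
    rw [le_div_iff₀ hδ0] at h2
    rw [le_div_iff₀ (by positivity : (0:ℝ) < 2 ^ n)]
    linarith
  have h_lo : D / 2 ^ (n+1) ≤ δ := by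
    have h1 : Real.logb 2 (D / δ) < (n:ℝ) + 1 := Nat.lt_floor_add_one _
    have h2 : D / δ < (2:ℝ) ^ (n+1) := by
      have := (Real.logb_lt_iff_lt_rpow one_lt_two hDδ).1 h1
      rwa [show ((n:ℝ)+1) = ((n+1:ℕ):ℝ) by push_cast; ring, Real.rpow_natCast] at this
    rw [div_lt_iff₀ hδ0] at h2
    rw [div_le_iff₀ (by positivity : (0:ℝ) < 2 ^ (n+1))]
    linarith
  have hcov : coverNum S δ ≤ ((pieces Δ (n+1)).filter
      (fun P => |r - f (pt P)| ≤ (D / 2 ^ (n+1)) ^ α)).card :=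
    coverNum_le_filter_card hcpt hself hα0 hf (n+1) r δ h_lo
  have hB : (coverNum S δ : ℝ)
      ≤ (((n+1:ℕ):ℝ)+1)^2 * 3^(n+1) * (2 * (D / 2^(n+1)) ^ α) :=
    le_trans (by exact_mod_cast hcov) hs1
  have hlogδ : (n:ℝ) * Real.log 2 - Real.log D ≤ -Real.log δ := by
    have h1 : Real.log δ ≤ Real.log (D / 2 ^ n) := Real.log_le_log hδ0 h_up
    rw [Real.log_div (ne_of_gt hD) (by positivity : (2:ℝ)^n ≠ 0), Real.log_pow] at h1
    push_cast at h1
    linarith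
  rcases Nat.eq_zero_or_pos (coverNum S δ) with h0 | hpos
  · rw [h0]
    simp only [Nat.cast_zero, Real.log_zero, zero_div]
    linarith
  · have hc1 : (1:ℝ) ≤ (coverNum S δ : ℝ) := by exact_mod_cast hpos
    have hnum0 : 0 ≤ Real.log (coverNum S δ) := Real.log_nonneg hc1
    calc Real.log (coverNum S δ) / (-Real.log δ)
        ≤ Real.log (coverNum S δ) / ((n:ℝ) * Real.log 2 - Real.log D) :=
          div_le_div_of_nonneg_left hnum0 hr3 hlogδ
      _ ≤ Real.log ((((n+1:ℕ):ℝ)+1)^2 * 3^(n+1) * (2 * (D / 2^(n+1)) ^ α))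
            / ((n:ℝ) * Real.log 2 - Real.log D) :=
          (div_le_div_iff_of_pos_right hr3).2 (Real.log_le_log (by linarith) hB)
      _ ≤ Real.log 3 / Real.log 2 - α + ε := hr2.le
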